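/- Let T be a set of rooted trees (extended traces from common states) whose edges flip or preserve a Boolean value according to a hidden assignment of signed effects. If two distinct root-to-event paths in two trees with the same root have first effect events e₁ and e₂ on the same ground atom, then in any sign assignment consistent with all traces, sign(e₁) = sign(e₂); adding this equality constraint to the alternation (inequality) constraints preserves satisfiability by the hidden assignment. -/
import Mathlib

lemma stmt_18_aux {n : ℕ} {s : ℕ → Bool} {E : Finset ℕ} {i : ℕ}
    (hE : E ⊆ Finset.range n)
    (hs : ∀ k < n, (s (k + 1) ≠ s k ↔ k ∈ E))
    (hi : i ∈ E) (himin : ∀ k ∈ E, i ≤ k) :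
    s (i + 1) = !(s 0) := by
  have hin : i < n := Finset.mem_range.mp (hE hi)
  have h0 : ∀ k ≤ i, s k = s 0 := by
    intro k hk
    induction k with
    | zero => rfl
    | succ k ih =>
      have hk' : k < n := lt_of_lt_of_le (Nat.lt_of_succ_le hk) hin.le
      have hkE : k ∉ E := fun h => absurd (himin k h) (Nat.not_le.mpr (Nat.lt_of_succ_le hk))
      have := (hs k hk').not
      simp only [not_not] at this
      rw [this.mpr hkE, ih (le_of_lt (Nat.lt_of_succ_le hk))]
  have hflip : s (i + 1) ≠ s i := (hs i hin).mpr hi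
  rw [h0 i le_rfl] at hflip
  cases h : s 0 <;> simp [h] at hflip ⊢ <;> simp [hflip]

/-- Fork constraints are sound and preserve satisfiability by the hidden sign
assignment: two traces `s` and `t` from a common state (`s 0 = t 0`) flip
exactly at their effect events `E` and `F`, each event being labeled by an
action pattern; then for the first events `i = min E` and `j = min F`, any
sign assignment consistent with both traces gives the two patterns equal
signs, and the hidden assignment `σh` still satisfies the alternation
(inequality) constraints together with the new equality constraint. -/
theorem stmt_18 {P : Type*} (n m : ℕ) (s t : ℕ → Bool) (E F : Finset ℕ)
    (pats patt : ℕ → P)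
    (hE : E ⊆ Finset.range n) (hF : F ⊆ Finset.range m)
    (hs : ∀ k < n, (s (k + 1) ≠ s k ↔ k ∈ E))
    (ht : ∀ k < m, (t (k + 1) ≠ t k ↔ k ∈ F))
    (hroot : s 0 = t 0)
    (i j : ℕ) (hi : i ∈ E) (himin : ∀ k ∈ E, i ≤ k)
    (hj : j ∈ F) (hjmin : ∀ k ∈ F, j ≤ k)
    (Ineq : Set (P × P)) (σh : P → Bool)
    (hσs : ∀ k ∈ E, s (k + 1) = σh (pats k))
    (hσt : ∀ k ∈ F, t (k + 1) = σh (patt k))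
    (hσC : ∀ pq ∈ Ineq, σh pq.1 ≠ σh pq.2) :
    (∀ σ : P → Bool, (∀ k ∈ E, s (k + 1) = σ (pats k)) →
        (∀ k ∈ F, t (k + 1) = σ (patt k)) → σ (pats i) = σ (patt j)) ∧
    (∃ σ : P → Bool, (∀ pq ∈ Ineq, σ pq.1 ≠ σ pq.2) ∧
        σ (pats i) = σ (patt j)) := by
  have hs1 : s (i + 1) = !(s 0) := stmt_18_aux hE hs hi himin
  have ht1 : t (j + 1) = !(t 0) := stmt_18_aux hF ht hj hjmin
  constructor
  · intro σ h1 h2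
    rw [← h1 i hi, ← h2 j hj, hs1, ht1, hroot]
  · exact ⟨σh, hσC, by rw [← hσs i hi, ← hσt j hj, hs1, ht1, hroot]⟩
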